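/- arXiv:1604.00180 — 6 statements merged into one kernel-verified Lean document; each statement's English description precedes it below -/
import Mathlib

section
/- For fixed real numbers $a_1,a_2,b_1,b_2,w,v$ with $w\neq 0$ and $(b_1,b_2)\neq(0,0)$, the function $k(L)=\sqrt{\frac{(a_1+Lb_2w)^2+(a_2-Lb_1w)^2+Lv^2}{(b_1^2+b_2^2+Lw^2)^2}-\frac{(a_1b_1+a_2b_2+Lwv)^2}{(b_1^2+b_2^2+Lw^2)^3}}$ tends to $\frac{\sqrt{b_1^2+b_2^2}}{|w|}$ as $L\to+\infty$. -/
open Filter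

/-- The Riemannian curvature `k^L_γ` at a non-horizontal point converges, as
`L → ∞`, to the sub-Riemannian curvature `√(b₁²+b₂²)/|w|`.  Here `b_i = γᵢ'`,
`a_i = γᵢ''`, `w = ω(γ') ≠ 0`, `v = ω(γ'')`. -/
theorem stmt1 (a1 a2 b1 b2 w v : ℝ) (hw : w ≠ 0) (hb : (b1, b2) ≠ (0, 0)) :
    Tendsto (fun L : ℝ =>
      Real.sqrt (((a1 + L * b2 * w) ^ 2 + (a2 - L * b1 * w) ^ 2 + L * v ^ 2)
          / (b1 ^ 2 + b2 ^ 2 + L * w ^ 2) ^ 2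
        - (a1 * b1 + a2 * b2 + L * w * v) ^ 2
          / (b1 ^ 2 + b2 ^ 2 + L * w ^ 2) ^ 3))
      atTop (nhds (Real.sqrt (b1 ^ 2 + b2 ^ 2) / |w|)) := by
  have hw2 : (0:ℝ) < w ^ 2 := by positivity
  set g : ℝ → ℝ := fun t =>
    ((a1 * t + b2 * w) ^ 2 + (a2 * t - b1 * w) ^ 2 + t * v ^ 2)
        / ((b1 ^ 2 + b2 ^ 2) * t + w ^ 2) ^ 2
      - t * ((a1 * b1 + a2 * b2) * t + w * v) ^ 2
        / ((b1 ^ 2 + b2 ^ 2) * t + w ^ 2) ^ 3 with hg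
  have hgc : ContinuousAt g 0 := by
    have hden : ((b1 ^ 2 + b2 ^ 2) * (0:ℝ) + w ^ 2) ≠ 0 := by
      simpa using hw2.ne'
    apply ContinuousAt.sub
    · exact ContinuousAt.div (by fun_prop) (by fun_prop) (by positivity)
    · exact ContinuousAt.div (by fun_prop) (by fun_prop) (by positivity)
  have hg0 : g 0 = (b1 ^ 2 + b2 ^ 2) / w ^ 2 := by
    rw [hg]
    field_simp
    ring
  have hinner : Tendsto (fun L : ℝ =>
      ((a1 + L * b2 * w) ^ 2 + (a2 - L * b1 * w) ^ 2 + L * v ^ 2)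
          / (b1 ^ 2 + b2 ^ 2 + L * w ^ 2) ^ 2
        - (a1 * b1 + a2 * b2 + L * w * v) ^ 2
          / (b1 ^ 2 + b2 ^ 2 + L * w ^ 2) ^ 3)
      atTop (nhds ((b1 ^ 2 + b2 ^ 2) / w ^ 2)) := by
    have hcomp : Tendsto (fun L : ℝ => g L⁻¹) atTop (nhds ((b1 ^ 2 + b2 ^ 2) / w ^ 2)) := by
      rw [← hg0]
      exact hgc.tendsto.comp tendsto_inv_atTop_zero
    refine hcomp.congr' ?_
    filter_upwards [eventually_gt_atTop (0:ℝ)] with L hL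
    have hL0 : L ≠ 0 := hL.ne'
    have hD : (0:ℝ) < b1 ^ 2 + b2 ^ 2 + L * w ^ 2 := by positivity
    have hD2 : (0:ℝ) < (b1 ^ 2 + b2 ^ 2) * L⁻¹ + w ^ 2 := by positivity
    rw [hg]
    field_simp
  have hsq : Real.sqrt ((b1 ^ 2 + b2 ^ 2) / w ^ 2)
      = Real.sqrt (b1 ^ 2 + b2 ^ 2) / |w| := by
    rw [Real.sqrt_div (by positivity), Real.sqrt_sq_eq_abs]
  rw [← hsq]
  exact (Real.continuous_sqrt.continuousAt.tendsto).comp hinner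
end

section
/- For the Korányi sphere $\Sigma=\{(x_1,x_2,x_3):(x_1^2+x_2^2)^2+16x_3^2=1\}$ defined by $u(x)=(x_1^2+x_2^2)^2+16x_3^2-1$, the sub-Riemannian Gaussian curvature at non-characteristic points equals $\mathcal{K}_0=-\frac{2}{x_1^2+x_2^2}+6(x_1^2+x_2^2)$. -/
/-!
The Korányi gauge and the ratio `F = X₃u/‖∇_H u‖` depend on `(x₁, x₂)` only through
`ρ = x₁² + x₂²`. On such functions `X₁ = 2x₁∂_ρ - (x₂/2)∂₃` and `X₂ = 2x₂∂_ρ + (x₁/2)∂₃`, so in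
`X₂u X₁F - X₁u X₂F` the mixed terms cancel and the curvature reduces to
`-F² - ρ(u₃ F_ρ - u_ρ F₃)/‖∇_H u‖`, a rational expression in `ρ`, `x₃` and
`√(ρ³ + 16ρx₃²)`; on the sphere `ρ² + 16x₃² = 1` the radicand is `ρ` and everything collapses to
`-2/ρ + 6ρ`.
-/

/-- The left-invariant vector field `X₁ = ∂₁ - (x₂/2)∂₃` acting on a function. -/
noncomputable def Xone (f : ℝ × ℝ × ℝ → ℝ) (x : ℝ × ℝ × ℝ) : ℝ :=
  deriv (fun s => f (s, x.2.1, x.2.2)) x.1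
    - x.2.1 / 2 * deriv (fun s => f (x.1, x.2.1, s)) x.2.2

/-- The left-invariant vector field `X₂ = ∂₂ + (x₁/2)∂₃` acting on a function. -/
noncomputable def Xtwo (f : ℝ × ℝ × ℝ → ℝ) (x : ℝ × ℝ × ℝ) : ℝ :=
  deriv (fun s => f (x.1, s, x.2.2)) x.2.1
    + x.1 / 2 * deriv (fun s => f (x.1, x.2.1, s)) x.2.2

/-- The vertical vector field `X₃ = ∂₃` acting on a function. -/
noncomputable def Xthree (f : ℝ × ℝ × ℝ → ℝ) (x : ℝ × ℝ × ℝ) : ℝ :=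
  deriv (fun s => f (x.1, x.2.1, s)) x.2.2

/-- Norm of the horizontal gradient `∇_H u = (X₁u, X₂u)`. -/
noncomputable def normH (u : ℝ × ℝ × ℝ → ℝ) (x : ℝ × ℝ × ℝ) : ℝ :=
  Real.sqrt ((Xone u x) ^ 2 + (Xtwo u x) ^ 2)

/-- The sub-Riemannian Gaussian curvature of the surface `{u = 0}`:
`𝒦₀ = -(X₃u/‖∇_Hu‖)² - (X₂u/‖∇_Hu‖)X₁(X₃u/‖∇_Hu‖) + (X₁u/‖∇_Hu‖)X₂(X₃u/‖∇_Hu‖)`. -/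
noncomputable def K0 (u : ℝ × ℝ × ℝ → ℝ) (x : ℝ × ℝ × ℝ) : ℝ :=
  -(Xthree u x / normH u x) ^ 2
    - (Xtwo u x / normH u x) * Xone (fun y => Xthree u y / normH u y) x
    + (Xone u x / normH u x) * Xtwo (fun y => Xthree u y / normH u y) x


section Radial

variable {g : ℝ → ℝ → ℝ} {f : ℝ × ℝ × ℝ → ℝ} {p q r d₁ d₂ d₃ : ℝ}

theorem Xone_eq_of_hasDerivAt (h₁ : HasDerivAt (fun s => f (s, q, r)) d₁ p)
    (h₃ : HasDerivAt (fun s => f (p, q, s)) d₃ r) : Xone f (p, q, r) = d₁ - q / 2 * d₃ := by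
  simp only [Xone, h₁.deriv, h₃.deriv]

theorem Xtwo_eq_of_hasDerivAt (h₂ : HasDerivAt (fun s => f (p, s, r)) d₂ q)
    (h₃ : HasDerivAt (fun s => f (p, q, s)) d₃ r) : Xtwo f (p, q, r) = d₂ + p / 2 * d₃ := by
  simp only [Xtwo, h₂.deriv, h₃.deriv]

theorem Xthree_eq_of_hasDerivAt (h₃ : HasDerivAt (fun s => f (p, q, s)) d₃ r) :
    Xthree f (p, q, r) = d₃ := by
  simp only [Xthree, h₃.deriv]

variable {gρ gr : ℝ}

theorem Xone_radial (hρ : HasDerivAt (fun s => g s r) gρ (p ^ 2 + q ^ 2))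
    (hr : HasDerivAt (g (p ^ 2 + q ^ 2)) gr r) :
    Xone (fun y => g (y.1 ^ 2 + y.2.1 ^ 2) y.2.2) (p, q, r) = 2 * p * gρ - q / 2 * gr := by
  have hsq : HasDerivAt (fun s => s ^ 2 + q ^ 2) (2 * p) p := by
    simpa using (hasDerivAt_pow 2 p).add_const (q ^ 2)
  have h₁ : HasDerivAt (fun s => g (s ^ 2 + q ^ 2) r) (gρ * (2 * p)) p := by
    exact hρ.comp p hsq
  rw [Xone_eq_of_hasDerivAt h₁ hr]
  ring

theorem Xtwo_radial (hρ : HasDerivAt (fun s => g s r) gρ (p ^ 2 + q ^ 2))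
    (hr : HasDerivAt (g (p ^ 2 + q ^ 2)) gr r) :
    Xtwo (fun y => g (y.1 ^ 2 + y.2.1 ^ 2) y.2.2) (p, q, r) = 2 * q * gρ + p / 2 * gr := by
  have hsq : HasDerivAt (fun s => p ^ 2 + s ^ 2) (2 * q) q := by
    simpa using (hasDerivAt_pow 2 q).const_add (p ^ 2)
  have h₂ : HasDerivAt (fun s => g (p ^ 2 + s ^ 2) r) (gρ * (2 * q)) q := by
    exact hρ.comp q hsq
  rw [Xtwo_eq_of_hasDerivAt h₂ hr]
  ring

theorem Xthree_radial (hr : HasDerivAt (g (p ^ 2 + q ^ 2)) gr r) :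
    Xthree (fun y => g (y.1 ^ 2 + y.2.1 ^ 2) y.2.2) (p, q, r) = gr :=
  Xthree_eq_of_hasDerivAt (f := fun y => g (y.1 ^ 2 + y.2.1 ^ 2) y.2.2) hr

theorem normH_radial (hρ : HasDerivAt (fun s => g s r) gρ (p ^ 2 + q ^ 2))
    (hr : HasDerivAt (g (p ^ 2 + q ^ 2)) gr r) :
    normH (fun y => g (y.1 ^ 2 + y.2.1 ^ 2) y.2.2) (p, q, r)
      = √((p ^ 2 + q ^ 2) * (4 * gρ ^ 2 + gr ^ 2 / 4)) := by
  rw [normH, Xone_radial hρ hr, Xtwo_radial hρ hr]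
  ring_nf

theorem sq_add_sq_pos_of_noncharacteristic_radial
    (hρ : HasDerivAt (fun s => g s r) gρ (p ^ 2 + q ^ 2)) (hr : HasDerivAt (g (p ^ 2 + q ^ 2)) gr r)
    (hnc : (Xone (fun y => g (y.1 ^ 2 + y.2.1 ^ 2) y.2.2) (p, q, r),
      Xtwo (fun y => g (y.1 ^ 2 + y.2.1 ^ 2) y.2.2) (p, q, r)) ≠ (0, 0)) :
    0 < p ^ 2 + q ^ 2 := by
  rw [Xone_radial hρ hr, Xtwo_radial hρ hr] at hnc
  refine lt_of_le_of_ne (by positivity) fun h => hnc ?_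
  obtain ⟨rfl, rfl⟩ : p = 0 ∧ q = 0 := by constructor <;> nlinarith [sq_nonneg p, sq_nonneg q]
  simp

end Radial

/-- `‖∇_H u‖` for `u = g(x₁² + x₂², x₃)`, in the variables `ρ = x₁² + x₂²` and `x₃`, given the
partial derivatives `gρ`, `gr` of `g`. -/
noncomputable def radialNormH (gρ gr : ℝ → ℝ → ℝ) (ρ r : ℝ) : ℝ :=
  √(ρ * (4 * gρ ρ r ^ 2 + gr ρ r ^ 2 / 4))

theorem K0_radial {g gρ gr : ℝ → ℝ → ℝ}
    (hgρ : ∀ ρ r, HasDerivAt (fun s => g s r) (gρ ρ r) ρ)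
    (hgr : ∀ ρ r, HasDerivAt (g ρ) (gr ρ r) r) {p q r Fρ Fr : ℝ}
    (hFρ : HasDerivAt (fun s => gr s r / radialNormH gρ gr s r) Fρ (p ^ 2 + q ^ 2))
    (hFr : HasDerivAt (fun s => gr (p ^ 2 + q ^ 2) s / radialNormH gρ gr (p ^ 2 + q ^ 2) s)
      Fr r) :
    K0 (fun y => g (y.1 ^ 2 + y.2.1 ^ 2) y.2.2) (p, q, r)
      = -(gr (p ^ 2 + q ^ 2) r / radialNormH gρ gr (p ^ 2 + q ^ 2) r) ^ 2
        - (p ^ 2 + q ^ 2) * (gr (p ^ 2 + q ^ 2) r * Fρ - gρ (p ^ 2 + q ^ 2) r * Fr)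
          / radialNormH gρ gr (p ^ 2 + q ^ 2) r := by
  have hF : (fun y => Xthree (fun y => g (y.1 ^ 2 + y.2.1 ^ 2) y.2.2) y
      / normH (fun y => g (y.1 ^ 2 + y.2.1 ^ 2) y.2.2) y)
        = fun y => gr (y.1 ^ 2 + y.2.1 ^ 2) y.2.2
          / radialNormH gρ gr (y.1 ^ 2 + y.2.1 ^ 2) y.2.2 := by
    funext ⟨a, b, c⟩
    rw [Xthree_radial (hgr _ _), normH_radial (hgρ _ _) (hgr _ _), radialNormH]
  rw [K0, hF, Xone_radial (g := fun ρ r => gr ρ r / radialNormH gρ gr ρ r) hFρ hFr,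
    Xtwo_radial (g := fun ρ r => gr ρ r / radialNormH gρ gr ρ r) hFρ hFr,
    Xone_radial (hgρ _ _) (hgr _ _), Xtwo_radial (hgρ _ _) (hgr _ _), Xthree_radial (hgr _ _),
    normH_radial (hgρ _ _) (hgr _ _)]
  unfold radialNormH
  ring

theorem HasDerivAt.div_sqrt {a b : ℝ → ℝ} {a' b' t : ℝ} (ha : HasDerivAt a a' t)
    (hb : HasDerivAt b b' t) (hbt : 0 < b t) :
    HasDerivAt (fun s => a s / √(b s)) ((2 * a' * b t - a t * b') / (2 * b t * √(b t))) t := by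
  have hs : √(b t) ≠ 0 := (Real.sqrt_pos.2 hbt).ne'
  refine (ha.fun_div (hb.sqrt hbt.ne') hs).congr_deriv ?_
  field_simp
  rw [Real.sq_sqrt hbt.le]
  ring

theorem koranyi_radialNormH (ρ r : ℝ) :
    radialNormH (fun ρ _ => 2 * ρ) (fun _ r => 32 * r) ρ r = 4 * √(ρ ^ 3 + 16 * ρ * r ^ 2) := by
  simp only [radialNormH]
  rw [show ρ * (4 * (2 * ρ) ^ 2 + (32 * r) ^ 2 / 4) = 4 ^ 2 * (ρ ^ 3 + 16 * ρ * r ^ 2) by ring,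
    Real.sqrt_mul (by positivity), Real.sqrt_sq (by norm_num)]

theorem hasDerivAt_koranyi_ratio_fst {ρ r : ℝ} (hG : 0 < ρ ^ 3 + 16 * ρ * r ^ 2) :
    HasDerivAt (fun s => 32 * r / radialNormH (fun ρ _ => 2 * ρ) (fun _ r => 32 * r) s r)
      (-4 * r * (3 * ρ ^ 2 + 16 * r ^ 2)
        / ((ρ ^ 3 + 16 * ρ * r ^ 2) * √(ρ ^ 3 + 16 * ρ * r ^ 2))) ρ := by
  have hG' : HasDerivAt (fun s => s ^ 3 + 16 * s * r ^ 2) (3 * ρ ^ 2 + 16 * r ^ 2) ρ :=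
    ((hasDerivAt_pow 3 ρ).fun_add (((hasDerivAt_id' ρ).const_mul 16).mul_const (r ^ 2))).congr_deriv
      (by norm_num)
  simp only [koranyi_radialNormH]
  convert (hasDerivAt_const ρ (8 * r)).div_sqrt hG' hG using 1
  · funext s; ring
  · field_simp; ring

theorem hasDerivAt_koranyi_ratio_snd {ρ r : ℝ} (hG : 0 < ρ ^ 3 + 16 * ρ * r ^ 2) :
    HasDerivAt (fun s => 32 * s / radialNormH (fun ρ _ => 2 * ρ) (fun _ r => 32 * r) ρ s)
      (8 * ρ ^ 3 / ((ρ ^ 3 + 16 * ρ * r ^ 2) * √(ρ ^ 3 + 16 * ρ * r ^ 2))) r := by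
  have hG' : HasDerivAt (fun s => ρ ^ 3 + 16 * ρ * s ^ 2) (32 * ρ * r) r :=
    (((hasDerivAt_pow 2 r).const_mul (16 * ρ)).const_add (ρ ^ 3)).congr_deriv (by ring)
  have hρ : ρ ≠ 0 := by rintro rfl; simp at hG
  simp only [koranyi_radialNormH]
  convert ((hasDerivAt_id' r).const_mul 8).div_sqrt hG' hG using 1
  · funext s; ring
  · field_simp; ring

/-- The sub-Riemannian Gaussian curvature of the Korányi sphere
`{(x₁²+x₂²)² + 16x₃² = 1}` at non-characteristic points equals
`-2/(x₁²+x₂²) + 6(x₁²+x₂²)`. -/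
theorem stmt13 (x : ℝ × ℝ × ℝ)
    (hx : (x.1 ^ 2 + x.2.1 ^ 2) ^ 2 + 16 * x.2.2 ^ 2 - 1 = 0)
    (hnc : (Xone (fun y => (y.1 ^ 2 + y.2.1 ^ 2) ^ 2 + 16 * y.2.2 ^ 2 - 1) x,
            Xtwo (fun y => (y.1 ^ 2 + y.2.1 ^ 2) ^ 2 + 16 * y.2.2 ^ 2 - 1) x)
          ≠ (0, 0)) :
    K0 (fun y => (y.1 ^ 2 + y.2.1 ^ 2) ^ 2 + 16 * y.2.2 ^ 2 - 1) x
      = -2 / (x.1 ^ 2 + x.2.1 ^ 2) + 6 * (x.1 ^ 2 + x.2.1 ^ 2) := by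
  obtain ⟨p, q, r⟩ := x
  have hgρ : ∀ ρ r : ℝ, HasDerivAt (fun s => s ^ 2 + 16 * r ^ 2 - 1) (2 * ρ) ρ := fun ρ r =>
    (((hasDerivAt_pow 2 ρ).add_const (16 * r ^ 2)).sub_const 1).congr_deriv (by ring)
  have hgr : ∀ ρ r : ℝ, HasDerivAt (fun s => ρ ^ 2 + 16 * s ^ 2 - 1) (32 * r) r := fun ρ r =>
    ((((hasDerivAt_pow 2 r).const_mul 16).const_add (ρ ^ 2)).sub_const 1).congr_deriv (by ring)
  have hρ : 0 < p ^ 2 + q ^ 2 :=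
    sq_add_sq_pos_of_noncharacteristic_radial (g := fun ρ r => ρ ^ 2 + 16 * r ^ 2 - 1)
      (hgρ _ r) (hgr _ r) hnc
  have hG : (p ^ 2 + q ^ 2) ^ 3 + 16 * (p ^ 2 + q ^ 2) * r ^ 2 = p ^ 2 + q ^ 2 := by
    linear_combination (p ^ 2 + q ^ 2) * hx
  have hGpos : 0 < (p ^ 2 + q ^ 2) ^ 3 + 16 * (p ^ 2 + q ^ 2) * r ^ 2 := by rwa [hG]
  refine (K0_radial hgρ hgr (hasDerivAt_koranyi_ratio_fst hGpos)
    (hasDerivAt_koranyi_ratio_snd hGpos)).trans ?_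
  simp only [koranyi_radialNormH, hG]
  field_simp
  rw [Real.sq_sqrt hρ.le]
  linear_combination (p ^ 2 + q ^ 2) * (512 * r ^ 2 + 64 * (p ^ 2 + q ^ 2) ^ 2 - 32) * hx
end

section
/- Let $u=x_3-f(x_1,x_2)$ define an $x_3$-graph in the Heisenberg group, and suppose near a non-characteristic point $g$ there is a constant $a$ with $X_2u=a\,X_1u$ in a neighborhood of $g$. Then the sub-Riemannian Gaussian curvature satisfies $\mathcal{K}_0(g)=0$. -/
/-!
On the graph `u = x₃ - f(x₁, x₂)` we have `X₃u = 1`, and `P = X₁u`, `Q = X₂u` depend only on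
`(x₁, x₂)`, so `𝒦₀ = (-(P² + Q²) + Q (P P₁ + Q Q₁) - P (P P₂ + Q Q₂)) / (P² + Q²)²`, subscripts
denoting partial derivatives. Differentiating `Q = a P` near `g` gives `Qᵢ = a Pᵢ`, and
`[X₁, X₂] = X₃` becomes `Q₁ - P₂ = 1`; together they turn the numerator into
`(P² + Q²) (Q₁ - P₂ - 1) = 0`.
-/

open Filter Topology

noncomputable def graphFun (f : ℝ × ℝ → ℝ) (y : ℝ × ℝ × ℝ) : ℝ := y.2.2 - f (y.1, y.2.1)

noncomputable def graphXone (f : ℝ × ℝ → ℝ) (v : ℝ × ℝ) : ℝ := -fderiv ℝ f v (1, 0) - v.2 / 2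

noncomputable def graphXtwo (f : ℝ × ℝ → ℝ) (v : ℝ × ℝ) : ℝ := -fderiv ℝ f v (0, 1) + v.1 / 2

theorem Xone_comp_proj (ψ : ℝ × ℝ → ℝ) (x : ℝ × ℝ × ℝ) :
    Xone (fun y => ψ (y.1, y.2.1)) x = deriv (fun s => ψ (s, x.2.1)) x.1 := by
  simp [Xone]

theorem Xtwo_comp_proj (ψ : ℝ × ℝ → ℝ) (x : ℝ × ℝ × ℝ) :
    Xtwo (fun y => ψ (y.1, y.2.1)) x = deriv (fun s => ψ (x.1, s)) x.2.1 := by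
  simp [Xtwo]

theorem deriv_comp_prodMk_left {𝕜 F G : Type*} [NontriviallyNormedField 𝕜]
    [NormedAddCommGroup F] [NormedSpace 𝕜 F] [NormedAddCommGroup G] [NormedSpace 𝕜 G]
    {ψ : 𝕜 × F → G} {t : 𝕜} {b : F} (hψ : DifferentiableAt 𝕜 ψ (t, b)) :
    deriv (fun s => ψ (s, b)) t = fderiv 𝕜 ψ (t, b) (1, 0) :=
  (hψ.hasFDerivAt.comp_hasDerivAt t ((hasDerivAt_id t).prodMk (hasDerivAt_const t b))).deriv

theorem deriv_comp_prodMk_right {𝕜 E G : Type*} [NontriviallyNormedField 𝕜]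
    [NormedAddCommGroup E] [NormedSpace 𝕜 E] [NormedAddCommGroup G] [NormedSpace 𝕜 G]
    {ψ : E × 𝕜 → G} {a : E} {t : 𝕜} (hψ : DifferentiableAt 𝕜 ψ (a, t)) :
    deriv (fun s => ψ (a, s)) t = fderiv 𝕜 ψ (a, t) (0, 1) :=
  (hψ.hasFDerivAt.comp_hasDerivAt t ((hasDerivAt_const t a).prodMk (hasDerivAt_id t))).deriv

theorem Xthree_graphFun (f : ℝ × ℝ → ℝ) (x : ℝ × ℝ × ℝ) : Xthree (graphFun f) x = 1 := by
  simp [Xthree, graphFun]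

theorem Xone_graphFun {f : ℝ × ℝ → ℝ} {x : ℝ × ℝ × ℝ} (hf : DifferentiableAt ℝ f (x.1, x.2.1)) :
    Xone (graphFun f) x = graphXone f (x.1, x.2.1) := by
  simp [Xone, graphFun, graphXone, deriv_comp_prodMk_left hf]

theorem Xtwo_graphFun {f : ℝ × ℝ → ℝ} {x : ℝ × ℝ × ℝ} (hf : DifferentiableAt ℝ f (x.1, x.2.1)) :
    Xtwo (graphFun f) x = graphXtwo f (x.1, x.2.1) := by
  simp [Xtwo, graphFun, graphXtwo, deriv_comp_prodMk_right hf]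

theorem hasFDerivAt_fderiv_apply {𝕜 E F : Type*} [NontriviallyNormedField 𝕜]
    [NormedAddCommGroup E] [NormedSpace 𝕜 E] [NormedAddCommGroup F] [NormedSpace 𝕜 F]
    {f : E → F} {v : E} (hf : DifferentiableAt 𝕜 (fderiv 𝕜 f) v) (e : E) :
    HasFDerivAt (fun w => fderiv 𝕜 f w e) ((fderiv 𝕜 (fderiv 𝕜 f) v).flip e) v := by
  simpa using hf.hasFDerivAt.clm_apply (hasFDerivAt_const e v)

theorem ContDiff.differentiable_fderiv {𝕜 E F : Type*} [NontriviallyNormedField 𝕜]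
    [NormedAddCommGroup E] [NormedSpace 𝕜 E] [NormedAddCommGroup F] [NormedSpace 𝕜 F]
    {f : E → F} (hf : ContDiff 𝕜 2 f) : Differentiable 𝕜 (fderiv 𝕜 f) :=
  (hf.fderiv_right (m := 1) (by norm_num)).differentiable one_ne_zero

theorem hasFDerivAt_graphXone {f : ℝ × ℝ → ℝ} (hf : ContDiff ℝ 2 f) (v : ℝ × ℝ) :
    HasFDerivAt (graphXone f)
      (-(fderiv ℝ (fderiv ℝ f) v).flip (1, 0) - (2 : ℝ)⁻¹ • ContinuousLinearMap.snd ℝ ℝ ℝ) v := by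
  refine ((hasFDerivAt_fderiv_apply (hf.differentiable_fderiv v) (1, 0)).neg.sub
    ((2 : ℝ)⁻¹ • ContinuousLinearMap.snd ℝ ℝ ℝ).hasFDerivAt).congr_of_eventuallyEq
    (Eventually.of_forall fun w => ?_)
  simp [graphXone, div_eq_inv_mul]

theorem hasFDerivAt_graphXtwo {f : ℝ × ℝ → ℝ} (hf : ContDiff ℝ 2 f) (v : ℝ × ℝ) :
    HasFDerivAt (graphXtwo f)
      (-(fderiv ℝ (fderiv ℝ f) v).flip (0, 1) + (2 : ℝ)⁻¹ • ContinuousLinearMap.fst ℝ ℝ ℝ) v := by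
  refine ((hasFDerivAt_fderiv_apply (hf.differentiable_fderiv v) (0, 1)).neg.add
    ((2 : ℝ)⁻¹ • ContinuousLinearMap.fst ℝ ℝ ℝ).hasFDerivAt).congr_of_eventuallyEq
    (Eventually.of_forall fun w => ?_)
  simp [graphXtwo, div_eq_inv_mul]

-- `[X₁, X₂] = X₃` on the graph; the second derivatives of `f` cancel by Schwarz's theorem.
theorem fderiv_graphXtwo_sub_fderiv_graphXone {f : ℝ × ℝ → ℝ} (hf : ContDiff ℝ 2 f) (v : ℝ × ℝ) :
    fderiv ℝ (graphXtwo f) v (1, 0) - fderiv ℝ (graphXone f) v (0, 1) = 1 := by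
  have hsymm := (hf.contDiffAt (x := v)).isSymmSndFDerivAt (by simp) (1, 0) (0, 1)
  rw [(hasFDerivAt_graphXtwo hf v).fderiv, (hasFDerivAt_graphXone hf v).fderiv]
  norm_num [hsymm]

theorem hasFDerivAt_inv_sqrt_sq_add_sq {E : Type*} [NormedAddCommGroup E] [NormedSpace ℝ E]
    {p q : E → ℝ} {p' q' : E →L[ℝ] ℝ} {v : E} (hp : HasFDerivAt p p' v) (hq : HasFDerivAt q q' v)
    (hpq : p v ^ 2 + q v ^ 2 ≠ 0) :
    HasFDerivAt (fun w => (√(p w ^ 2 + q w ^ 2))⁻¹)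
      (-(√(p v ^ 2 + q v ^ 2) ^ 3)⁻¹ • (p v • p' + q v • q')) v := by
  have hS : 0 < p v ^ 2 + q v ^ 2 := lt_of_le_of_ne (by positivity) hpq.symm
  have hsqrt : √(p v ^ 2 + q v ^ 2) ≠ 0 := (Real.sqrt_pos.2 hS).ne'
  refine ((hasDerivAt_inv hsqrt).comp_hasFDerivAt v
    (((hp.pow 2).add (hq.pow 2)).sqrt hpq)).congr_fderiv (ContinuousLinearMap.ext fun w => ?_)
  simp
  field_simp

theorem K0_graphFun {f : ℝ × ℝ → ℝ} (hf : ContDiff ℝ 2 f) {v : ℝ × ℝ} (z : ℝ)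
    (hv : graphXone f v ^ 2 + graphXtwo f v ^ 2 ≠ 0) :
    K0 (graphFun f) (v.1, v.2, z) =
      (-(graphXone f v ^ 2 + graphXtwo f v ^ 2)
        + graphXtwo f v * (graphXone f v * fderiv ℝ (graphXone f) v (1, 0)
            + graphXtwo f v * fderiv ℝ (graphXtwo f) v (1, 0))
        - graphXone f v * (graphXone f v * fderiv ℝ (graphXone f) v (0, 1)
            + graphXtwo f v * fderiv ℝ (graphXtwo f) v (0, 1)))
      / (graphXone f v ^ 2 + graphXtwo f v ^ 2) ^ 2 := by
  have hdiff : Differentiable ℝ f := hf.differentiable (by norm_num)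
  have hnormH (x : ℝ × ℝ × ℝ) : normH (graphFun f) x =
      √(graphXone f (x.1, x.2.1) ^ 2 + graphXtwo f (x.1, x.2.1) ^ 2) := by
    rw [normH, Xone_graphFun (hdiff _), Xtwo_graphFun (hdiff _)]
  set ψ : ℝ × ℝ → ℝ := fun w => (√(graphXone f w ^ 2 + graphXtwo f w ^ 2))⁻¹
  have hinv : (fun x => Xthree (graphFun f) x / normH (graphFun f) x) =
      fun x => ψ (x.1, x.2.1) := by
    funext x; rw [Xthree_graphFun, hnormH, one_div]
  have hD := hasFDerivAt_inv_sqrt_sq_add_sq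
    (hasFDerivAt_graphXone hf v).differentiableAt.hasFDerivAt
    (hasFDerivAt_graphXtwo hf v).differentiableAt.hasFDerivAt hv
  have hS : 0 < graphXone f v ^ 2 + graphXtwo f v ^ 2 := lt_of_le_of_ne (by positivity) hv.symm
  rw [K0, hinv, Xone_comp_proj ψ, Xtwo_comp_proj ψ, Xthree_graphFun, hnormH,
    Xone_graphFun (hdiff _), Xtwo_graphFun (hdiff _), deriv_comp_prodMk_left hD.differentiableAt,
    deriv_comp_prodMk_right hD.differentiableAt, hD.fderiv]
  simp
  field_simp
  rw [show ∀ r : ℝ, r ^ 4 = (r ^ 2) ^ 2 from fun r => by ring, Real.sq_sqrt hS.le]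
  ring

theorem stmt15_general (f : ℝ × ℝ → ℝ) (hf : ContDiff ℝ 2 f) (g : ℝ × ℝ × ℝ)
    (hnc : (Xone (fun y => y.2.2 - f (y.1, y.2.1)) g,
            Xtwo (fun y => y.2.2 - f (y.1, y.2.1)) g) ≠ (0, 0))
    (a : ℝ)
    (hdep : ∀ᶠ x in nhds g,
      Xtwo (fun y => y.2.2 - f (y.1, y.2.1)) x
        = a * Xone (fun y => y.2.2 - f (y.1, y.2.1)) x) :
    K0 (fun y => y.2.2 - f (y.1, y.2.1)) g = 0 := by
  rw [show (fun y : ℝ × ℝ × ℝ => y.2.2 - f (y.1, y.2.1)) = graphFun f from rfl] at hnc hdep ⊢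
  obtain ⟨t, b, z⟩ := g
  have hdiff : Differentiable ℝ f := hf.differentiable (by norm_num)
  have hQP : graphXtwo f =ᶠ[𝓝 (t, b)] fun w => a * graphXone f w := by
    have hlift : Tendsto (fun w : ℝ × ℝ => (w.1, w.2, z)) (𝓝 (t, b)) (𝓝 (t, b, z)) :=
      (by fun_prop : Continuous fun w : ℝ × ℝ => (w.1, w.2, z)).tendsto (t, b)
    filter_upwards [hlift.eventually hdep] with w hw
    rwa [Xone_graphFun (hdiff _), Xtwo_graphFun (hdiff _)] at hw
  have hP : graphXone f (t, b) ≠ 0 := by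
    intro h0
    apply hnc
    rw [Xone_graphFun (hdiff _), Xtwo_graphFun (hdiff _)]
    simp [hQP.eq_of_nhds, h0]
  have hQ' : fderiv ℝ (graphXtwo f) (t, b) = a • fderiv ℝ (graphXone f) (t, b) := by
    rw [hQP.fderiv_eq, fderiv_const_mul (hasFDerivAt_graphXone hf _).differentiableAt]
  have hcomm := fderiv_graphXtwo_sub_fderiv_graphXone hf (t, b)
  refine (K0_graphFun hf (v := (t, b)) z (by positivity)).trans (div_eq_zero_iff.2 (Or.inl ?_))
  rw [hQ'] at hcomm ⊢
  rw [hQP.eq_of_nhds]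
  simp only [smul_apply, smul_eq_mul] at hcomm ⊢
  linear_combination (1 + a ^ 2) * graphXone f (t, b) ^ 2 * hcomm

/-- For an `x₃`-graph `u = x₃ - f(x₁,x₂)`, if `X₂u = a·X₁u` in a
neighborhood of a non-characteristic point `g`, then `𝒦₀(g) = 0`. -/
theorem stmt15 (f : ℝ × ℝ → ℝ) (hf : ContDiff ℝ 2 f) (g : ℝ × ℝ × ℝ)
    (hg : g.2.2 = f (g.1, g.2.1))
    (hnc : (Xone (fun y => y.2.2 - f (y.1, y.2.1)) g,
            Xtwo (fun y => y.2.2 - f (y.1, y.2.1)) g) ≠ (0, 0))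
    (a : ℝ)
    (hdep : ∀ᶠ x in nhds g,
      Xtwo (fun y => y.2.2 - f (y.1, y.2.1)) x
        = a * Xone (fun y => y.2.2 - f (y.1, y.2.1)) x) :
    K0 (fun y => y.2.2 - f (y.1, y.2.1)) g = 0 :=
  stmt15_general f hf g hnc a hdep
end

section
/- Let $\Sigma$ be a surface of revolution $\{x_3=f(\tfrac{x_1^2+x_2^2}{4})\}$ with $f\in C^2$, defined by $u=x_3-f(r)$ where $r=(x_1^2+x_2^2)/4$. Then $\|\nabla_Hu\|=\tfrac12\sqrt{x_1^2+x_2^2}\sqrt{1+f'(r)^2}$ and the sub-Riemannian Gaussian curvature equals $\mathcal{K}_0=-\frac{2}{(x_1^2+x_2^2)(1+f'(r)^2)}+\frac{f'(r)f''(r)}{(1+f'(r)^2)^2}$ at points with $x_1^2+x_2^2>0$. Consequently $\mathcal{K}_0$ is locally integrable with respect to the Heisenberg perimeter measure near the isolated characteristic point at the origin. -/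
open MeasureTheory

/-!
With `t = x₁² + x₂²`, the horizontal gradient of `u` is explicit and
`‖∇_H u‖² = q(t) := t (1 + f'(t/4)²) / 4`, so `X₃u / ‖∇_H u‖ = q(t)^{-1/2}` is radial.
For a radial `φ(t)` one has `X₁φ = 2x₁φ'` and `X₂φ = 2x₂φ'`, hence
`𝒦₀ = -φ² + 2φ' (x₂ X₁u - x₁ X₂u) / ‖∇_H u‖`, where `x₂ X₁u - x₁ X₂u = -t/2`;
differentiating `q^{-1/2}` gives the closed formula.
On the graph, `𝒦₀ ‖∇_H u‖` is a continuous function plus `-(√t · √(1 + f'²))⁻¹`,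
which is bounded by `‖p‖⁻¹` and therefore integrable near the origin of the plane.
-/

theorem HasDerivAt.comp_sq_add {g : ℝ → ℝ} {g' c s : ℝ} (hg : HasDerivAt g g' (s ^ 2 + c)) :
    HasDerivAt (fun s => g (s ^ 2 + c)) (2 * s * g') s := by
  have hsq : HasDerivAt (fun s : ℝ => s ^ 2 + c) (2 * s) s := by
    simpa using (hasDerivAt_pow 2 s).add_const c
  exact (hg.comp s hsq).congr_deriv (by ring)

section Radial

variable {g : ℝ → ℝ} {g' : ℝ} {x : ℝ × ℝ × ℝ}

theorem Xone_radial_s16 (hg : HasDerivAt g g' (x.1 ^ 2 + x.2.1 ^ 2)) :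
    Xone (fun y => g (y.1 ^ 2 + y.2.1 ^ 2)) x = 2 * x.1 * g' := by
  simp [Xone, hg.comp_sq_add.deriv]

theorem Xtwo_radial_s16 (hg : HasDerivAt g g' (x.1 ^ 2 + x.2.1 ^ 2)) :
    Xtwo (fun y => g (y.1 ^ 2 + y.2.1 ^ 2)) x = 2 * x.2.1 * g' := by
  rw [add_comm] at hg
  simp [Xtwo, add_comm (x.1 ^ 2), hg.comp_sq_add.deriv]

theorem K0_of_radial {u : ℝ × ℝ × ℝ → ℝ} {φ : ℝ → ℝ} {φ' : ℝ}
    (hv : (fun y => Xthree u y / normH u y) = fun y => φ (y.1 ^ 2 + y.2.1 ^ 2))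
    (hφ : HasDerivAt φ φ' (x.1 ^ 2 + x.2.1 ^ 2)) :
    K0 u x = -φ (x.1 ^ 2 + x.2.1 ^ 2) ^ 2
      + 2 * φ' * (x.2.1 * Xone u x - x.1 * Xtwo u x) / normH u x := by
  have hvx : Xthree u x / normH u x = φ (x.1 ^ 2 + x.2.1 ^ 2) := congrFun hv x
  rw [K0, hv, hvx, Xone_radial_s16 hφ, Xtwo_radial_s16 hφ]
  ring

end Radial

noncomputable def revolutionDefiningFn (f : ℝ → ℝ) (y : ℝ × ℝ × ℝ) : ℝ :=
  y.2.2 - f ((y.1 ^ 2 + y.2.1 ^ 2) / 4)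

/- The radial profiles below are functions of `t = x₁² + x₂²`, not of the paper's `r = t / 4`. -/

noncomputable def normHSqRadial (f : ℝ → ℝ) (t : ℝ) : ℝ :=
  t * (1 + deriv f (t / 4) ^ 2) / 4

noncomputable def K0Radial (f : ℝ → ℝ) (t : ℝ) : ℝ :=
  -2 / (t * (1 + deriv f (t / 4) ^ 2))
    + deriv f (t / 4) * deriv (deriv f) (t / 4) / (1 + deriv f (t / 4) ^ 2) ^ 2

theorem sqrt_normHSqRadial (f : ℝ → ℝ) {t : ℝ} (ht : 0 ≤ t) :
    √(normHSqRadial f t) = 1 / 2 * √t * √(1 + deriv f (t / 4) ^ 2) := by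
  rw [normHSqRadial, show t * (1 + deriv f (t / 4) ^ 2) / 4
      = (1 / 2) ^ 2 * t * (1 + deriv f (t / 4) ^ 2) by ring,
    Real.sqrt_mul (by positivity), Real.sqrt_mul (by positivity), Real.sqrt_sq (by norm_num)]

theorem hasDerivAt_normHSqRadial {f : ℝ → ℝ} {t : ℝ}
    (hf : DifferentiableAt ℝ (deriv f) (t / 4)) :
    HasDerivAt (normHSqRadial f)
      ((1 + deriv f (t / 4) ^ 2) / 4 + t * deriv f (t / 4) * deriv (deriv f) (t / 4) / 8) t := by
  have h4 : HasDerivAt (fun t : ℝ => t / 4) (1 / 4) t := (hasDerivAt_id t).div_const 4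
  have ha := hf.hasDerivAt.comp t h4
  have := ((hasDerivAt_id t).mul ((ha.pow 2).const_add 1)).div_const 4
  exact this.congr_deriv (by simp only [Pi.pow_apply, Function.comp_apply, id_eq]; ring)

section Revolution

variable {f : ℝ → ℝ} {x : ℝ × ℝ × ℝ}

theorem Xone_revolutionDefiningFn (hf : DifferentiableAt ℝ f ((x.1 ^ 2 + x.2.1 ^ 2) / 4)) :
    Xone (revolutionDefiningFn f) x
      = -(x.2.1 + x.1 * deriv f ((x.1 ^ 2 + x.2.1 ^ 2) / 4)) / 2 := by
  have hg : HasDerivAt (fun t => x.2.2 - f (t / 4))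
      (-(deriv f ((x.1 ^ 2 + x.2.1 ^ 2) / 4) * (1 / 4))) (x.1 ^ 2 + x.2.1 ^ 2) :=
    (hf.hasDerivAt.comp (x.1 ^ 2 + x.2.1 ^ 2)
      ((hasDerivAt_id (x.1 ^ 2 + x.2.1 ^ 2)).div_const 4)).const_sub x.2.2
  simp only [Xone, revolutionDefiningFn, hg.comp_sq_add.deriv, deriv_sub_const, deriv_id'']
  ring

theorem Xtwo_revolutionDefiningFn (hf : DifferentiableAt ℝ f ((x.1 ^ 2 + x.2.1 ^ 2) / 4)) :
    Xtwo (revolutionDefiningFn f) x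
      = (x.1 - x.2.1 * deriv f ((x.1 ^ 2 + x.2.1 ^ 2) / 4)) / 2 := by
  rw [add_comm] at hf
  have hg : HasDerivAt (fun t => x.2.2 - f (t / 4))
      (-(deriv f ((x.2.1 ^ 2 + x.1 ^ 2) / 4) * (1 / 4))) (x.2.1 ^ 2 + x.1 ^ 2) :=
    (hf.hasDerivAt.comp (x.2.1 ^ 2 + x.1 ^ 2)
      ((hasDerivAt_id (x.2.1 ^ 2 + x.1 ^ 2)).div_const 4)).const_sub x.2.2
  simp only [Xtwo, revolutionDefiningFn, add_comm (x.1 ^ 2), hg.comp_sq_add.deriv,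
    deriv_sub_const, deriv_id'']
  ring

theorem Xthree_revolutionDefiningFn : Xthree (revolutionDefiningFn f) x = 1 := by
  simp [Xthree, revolutionDefiningFn]

theorem normH_revolutionDefiningFn (hf : DifferentiableAt ℝ f ((x.1 ^ 2 + x.2.1 ^ 2) / 4)) :
    normH (revolutionDefiningFn f) x = √(normHSqRadial f (x.1 ^ 2 + x.2.1 ^ 2)) := by
  rw [normH, Xone_revolutionDefiningFn hf, Xtwo_revolutionDefiningFn hf, normHSqRadial]
  ring_nf

theorem Xthree_div_normH_revolutionDefiningFn (hf : Differentiable ℝ f) :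
    (fun y => Xthree (revolutionDefiningFn f) y / normH (revolutionDefiningFn f) y)
      = fun y => (√(normHSqRadial f (y.1 ^ 2 + y.2.1 ^ 2)))⁻¹ := by
  ext y
  rw [Xthree_revolutionDefiningFn, normH_revolutionDefiningFn (hf _), one_div]

theorem K0_revolutionDefiningFn (hf : ContDiff ℝ 2 f) (hx : 0 < x.1 ^ 2 + x.2.1 ^ 2) :
    K0 (revolutionDefiningFn f) x = K0Radial f (x.1 ^ 2 + x.2.1 ^ 2) := by
  have hd : Differentiable ℝ f := hf.differentiable (by norm_num)
  set t := x.1 ^ 2 + x.2.1 ^ 2 with ht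
  have hcross : x.2.1 * (-(x.2.1 + x.1 * deriv f (t / 4)) / 2)
      - x.1 * ((x.1 - x.2.1 * deriv f (t / 4)) / 2) = -t / 2 := by
    rw [ht]; ring
  have hq := hasDerivAt_normHSqRadial (hf.differentiable_deriv_two (t / 4))
  have hq_pos : 0 < normHSqRadial f t := by unfold normHSqRadial; positivity
  have hs_pos : 0 < √(normHSqRadial f t) := Real.sqrt_pos.mpr hq_pos
  have hs_sq : √(normHSqRadial f t) ^ 2 = normHSqRadial f t := Real.sq_sqrt hq_pos.le
  rw [K0_of_radial (Xthree_div_normH_revolutionDefiningFn hd)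
      ((hq.sqrt hq_pos.ne').inv hs_pos.ne'),
    Xone_revolutionDefiningFn (hd _), Xtwo_revolutionDefiningFn (hd _),
    normH_revolutionDefiningFn (hd _), hcross]
  simp only [Pi.inv_apply, ← ht, K0Radial]
  set s := √(normHSqRadial f t)
  rw [normHSqRadial] at hs_sq
  field_simp
  rw [show s ^ 4 = (s ^ 2) ^ 2 by ring, hs_sq]
  ring

end Revolution

theorem norm_le_sqrt_sq_add_sq (p : ℝ × ℝ) : ‖p‖ ≤ √(p.1 ^ 2 + p.2 ^ 2) :=
  max_le (Real.abs_le_sqrt (by nlinarith [sq_nonneg p.2]))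
    (Real.abs_le_sqrt (by nlinarith [sq_nonneg p.1]))

theorem abs_neg_two_div_mul_sqrt_normHSqRadial_le (f : ℝ → ℝ) {t : ℝ} (ht : 0 ≤ t) :
    |-2 / (t * (1 + deriv f (t / 4) ^ 2)) * √(normHSqRadial f t)| ≤ (√t)⁻¹ := by
  rcases ht.eq_or_lt with rfl | ht
  · simp
  have hs : 0 < √t := Real.sqrt_pos.mpr ht
  have hw : 1 ≤ √(1 + deriv f (t / 4) ^ 2) := Real.one_le_sqrt.mpr (le_add_of_nonneg_right (sq_nonneg _))
  have hval : -2 / (t * (1 + deriv f (t / 4) ^ 2)) * √(normHSqRadial f t)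
      = -(√t * √(1 + deriv f (t / 4) ^ 2))⁻¹ := by
    rw [sqrt_normHSqRadial f ht.le]
    nth_rw 1 [← Real.sq_sqrt ht.le, ← Real.sq_sqrt (by positivity : 0 ≤ 1 + deriv f (t / 4) ^ 2)]
    field_simp
  rw [hval, abs_neg, abs_of_pos (by positivity)]
  exact inv_anti₀ hs (le_mul_of_one_le_right hs.le hw)

theorem integrableOn_ball_K0Radial_mul_sqrt_normHSqRadial {f : ℝ → ℝ} (hf : ContDiff ℝ 2 f)
    (r : ℝ) :
    IntegrableOn (fun p : ℝ × ℝ =>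
      K0Radial f (p.1 ^ 2 + p.2 ^ 2) * √(normHSqRadial f (p.1 ^ 2 + p.2 ^ 2)))
      (Metric.ball 0 r) := by
  have hsing : IntegrableOn (fun p : ℝ × ℝ =>
      -2 / ((p.1 ^ 2 + p.2 ^ 2) * (1 + deriv f ((p.1 ^ 2 + p.2 ^ 2) / 4) ^ 2))
        * √(normHSqRadial f (p.1 ^ 2 + p.2 ^ 2))) (Metric.ball 0 r) := by
    refine integrableOn_ball_of_norm_le_rpow (C := 1) (α := 1) (by simp) (by simp) ?_ ?_
    · filter_upwards [ae_restrict_of_ae (volume.ae_ne 0)] with p hp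
      rw [Real.norm_eq_abs, one_mul, Real.rpow_neg_one]
      calc _ ≤ (√(p.1 ^ 2 + p.2 ^ 2))⁻¹ :=
            abs_neg_two_div_mul_sqrt_normHSqRadial_le f (by positivity)
        _ ≤ ‖p‖⁻¹ := inv_anti₀ (norm_pos_iff.mpr hp) (norm_le_sqrt_sq_add_sq p)
    · have := measurable_deriv f
      unfold normHSqRadial
      fun_prop
  have hreg : IntegrableOn (fun p : ℝ × ℝ =>
      deriv f ((p.1 ^ 2 + p.2 ^ 2) / 4) * deriv (deriv f) ((p.1 ^ 2 + p.2 ^ 2) / 4)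
        / (1 + deriv f ((p.1 ^ 2 + p.2 ^ 2) / 4) ^ 2) ^ 2
        * √(normHSqRadial f (p.1 ^ 2 + p.2 ^ 2))) (Metric.ball 0 r) := by
    have h1 := hf.continuous_deriv (by norm_num)
    have h2 := (hf.deriv' (n := 1)).continuous_deriv_one
    have hcont : Continuous fun p : ℝ × ℝ =>
        deriv f ((p.1 ^ 2 + p.2 ^ 2) / 4) * deriv (deriv f) ((p.1 ^ 2 + p.2 ^ 2) / 4)
          / (1 + deriv f ((p.1 ^ 2 + p.2 ^ 2) / 4) ^ 2) ^ 2
          * √(normHSqRadial f (p.1 ^ 2 + p.2 ^ 2)) := by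
      unfold normHSqRadial
      fun_prop (disch := intro p; positivity)
    exact (hcont.continuousOn.integrableOn_compact (isCompact_closedBall 0 r)).mono_set
      Metric.ball_subset_closedBall
  refine (hsing.add hreg).congr_fun (fun p _ => ?_) measurableSet_ball
  simp only [K0Radial, add_mul, Pi.add_apply]

/-- For the surface of revolution `{x₃ = f((x₁²+x₂²)/4)}` with `f ∈ C²` and
`u = x₃ - f(r)`, `r = (x₁²+x₂²)/4`: the horizontal gradient norm is
`½√(x₁²+x₂²)·√(1+f'(r)²)`, the sub-Riemannian Gaussian curvature is
`-2/((x₁²+x₂²)(1+f'(r)²)) + f'f''/(1+f'(r)²)²` away from the axis, and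
`𝒦₀` is locally integrable near the isolated characteristic point at the
origin with respect to the Heisenberg perimeter measure (formulated via the
graph parametrization, whose perimeter-measure density is `‖∇_Hu‖`). -/
theorem stmt16 (f : ℝ → ℝ) (hf : ContDiff ℝ 2 f) :
    (∀ x : ℝ × ℝ × ℝ, 0 < x.1 ^ 2 + x.2.1 ^ 2 →
      normH (fun y => y.2.2 - f ((y.1 ^ 2 + y.2.1 ^ 2) / 4)) x
        = (1 / 2) * Real.sqrt (x.1 ^ 2 + x.2.1 ^ 2)
            * Real.sqrt (1 + (deriv f ((x.1 ^ 2 + x.2.1 ^ 2) / 4)) ^ 2)) ∧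
    (∀ x : ℝ × ℝ × ℝ, 0 < x.1 ^ 2 + x.2.1 ^ 2 →
      K0 (fun y => y.2.2 - f ((y.1 ^ 2 + y.2.1 ^ 2) / 4)) x
        = -2 / ((x.1 ^ 2 + x.2.1 ^ 2)
              * (1 + (deriv f ((x.1 ^ 2 + x.2.1 ^ 2) / 4)) ^ 2))
          + deriv f ((x.1 ^ 2 + x.2.1 ^ 2) / 4)
              * deriv (deriv f) ((x.1 ^ 2 + x.2.1 ^ 2) / 4)
            / (1 + (deriv f ((x.1 ^ 2 + x.2.1 ^ 2) / 4)) ^ 2) ^ 2) ∧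
    (∃ ε > 0, IntegrableOn
      (fun p : ℝ × ℝ =>
        K0 (fun y => y.2.2 - f ((y.1 ^ 2 + y.2.1 ^ 2) / 4))
            (p.1, p.2, f ((p.1 ^ 2 + p.2 ^ 2) / 4))
          * normH (fun y => y.2.2 - f ((y.1 ^ 2 + y.2.1 ^ 2) / 4))
            (p.1, p.2, f ((p.1 ^ 2 + p.2 ^ 2) / 4)))
      (Metric.ball (0 : ℝ × ℝ) ε) volume) := by
  have hd : Differentiable ℝ f := hf.differentiable (by norm_num)
  have hu : (fun y : ℝ × ℝ × ℝ => y.2.2 - f ((y.1 ^ 2 + y.2.1 ^ 2) / 4)) = revolutionDefiningFn f :=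
    rfl
  rw [hu]
  refine ⟨fun x hx => (normH_revolutionDefiningFn (hd _)).trans (sqrt_normHSqRadial f hx.le),
    fun x hx => K0_revolutionDefiningFn hf hx, 1, one_pos, ?_⟩
  refine (integrableOn_ball_K0Radial_mul_sqrt_normHSqRadial hf 1).congr_fun_ae ?_
  filter_upwards [ae_restrict_of_ae (volume.ae_ne 0)] with p hp
  have hpos : 0 < p.1 ^ 2 + p.2 ^ 2 :=
    Real.sqrt_pos.mp ((norm_pos_iff.mpr hp).trans_le (norm_le_sqrt_sq_add_sq p))
  rw [K0_revolutionDefiningFn hf hpos, normH_revolutionDefiningFn (hd _)]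
end

section
/- For the paraboloid $\Sigma=\{x_3=\alpha(x_1^2+x_2^2)\}$ with $\alpha>0$ and defining function $u=x_3-\alpha(x_1^2+x_2^2)$, the sub-Riemannian Gaussian curvature at non-characteristic points equals $\mathcal{K}_0=-\frac{1}{1+16\alpha^2}\cdot\frac{2}{x_1^2+x_2^2}$. -/
open Real

lemma Xone_paraboloid (α : ℝ) (y : ℝ × ℝ × ℝ) :
    Xone (fun y => y.2.2 - α * (y.1 ^ 2 + y.2.1 ^ 2)) y = -(2 * α * y.1) - y.2.1 / 2 := by
  have h₁ : HasDerivAt (fun s : ℝ => y.2.2 - α * (s ^ 2 + y.2.1 ^ 2)) (-(2 * α * y.1)) y.1 := by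
    refine ((((hasDerivAt_pow 2 y.1).add_const (y.2.1 ^ 2)).const_mul α).const_sub
      y.2.2).congr_deriv ?_
    norm_num
    ring
  have h₃ : HasDerivAt (fun s : ℝ => s - α * (y.1 ^ 2 + y.2.1 ^ 2)) 1 y.2.2 :=
    (hasDerivAt_id _).sub_const _
  simp only [Xone, h₁.deriv, h₃.deriv, mul_one]

lemma Xtwo_paraboloid (α : ℝ) (y : ℝ × ℝ × ℝ) :
    Xtwo (fun y => y.2.2 - α * (y.1 ^ 2 + y.2.1 ^ 2)) y = -(2 * α * y.2.1) + y.1 / 2 := by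
  have h₂ : HasDerivAt (fun s : ℝ => y.2.2 - α * (y.1 ^ 2 + s ^ 2)) (-(2 * α * y.2.1)) y.2.1 := by
    refine ((((hasDerivAt_pow 2 y.2.1).const_add (y.1 ^ 2)).const_mul α).const_sub
      y.2.2).congr_deriv ?_
    norm_num
    ring
  have h₃ : HasDerivAt (fun s : ℝ => s - α * (y.1 ^ 2 + y.2.1 ^ 2)) 1 y.2.2 :=
    (hasDerivAt_id _).sub_const _
  simp only [Xtwo, h₂.deriv, h₃.deriv, mul_one]

lemma Xthree_paraboloid (α : ℝ) (y : ℝ × ℝ × ℝ) :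
    Xthree (fun y => y.2.2 - α * (y.1 ^ 2 + y.2.1 ^ 2)) y = 1 := by
  simp [Xthree]

lemma normH_paraboloid (α : ℝ) (y : ℝ × ℝ × ℝ) :
    normH (fun y => y.2.2 - α * (y.1 ^ 2 + y.2.1 ^ 2)) y
      = √(1 + 16 * α ^ 2) * √(y.1 ^ 2 + y.2.1 ^ 2) / 2 := by
  have h : (Xone (fun y => y.2.2 - α * (y.1 ^ 2 + y.2.1 ^ 2)) y) ^ 2
      + (Xtwo (fun y => y.2.2 - α * (y.1 ^ 2 + y.2.1 ^ 2)) y) ^ 2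
      = (√(1 + 16 * α ^ 2) * √(y.1 ^ 2 + y.2.1 ^ 2) / 2) ^ 2 := by
    rw [Xone_paraboloid, Xtwo_paraboloid, div_pow, mul_pow, sq_sqrt (by positivity),
      sq_sqrt (by positivity)]
    ring
  rw [normH, h, sqrt_sq (by positivity)]

lemma hasDerivAt_inv_sqrt_sq_add_sq {a : ℝ} (b : ℝ) (h : a ^ 2 + b ^ 2 ≠ 0) :
    HasDerivAt (fun s => (√(s ^ 2 + b ^ 2))⁻¹) (-(a / √(a ^ 2 + b ^ 2) ^ 3)) a := by
  have hsqrt : √(a ^ 2 + b ^ 2) ≠ 0 := (sqrt_pos.2 (lt_of_le_of_ne (by positivity) h.symm)).ne'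
  refine ((((hasDerivAt_pow 2 a).add_const (b ^ 2)).sqrt h).inv hsqrt).congr_deriv ?_
  field_simp
  norm_num

lemma Xone_const_mul_inv_sqrt {x : ℝ × ℝ × ℝ} (c : ℝ) (hx : x.1 ^ 2 + x.2.1 ^ 2 ≠ 0) :
    Xone (fun y => c * (√(y.1 ^ 2 + y.2.1 ^ 2))⁻¹) x
      = -(c * x.1 / √(x.1 ^ 2 + x.2.1 ^ 2) ^ 3) := by
  simp only [Xone, deriv_const', mul_zero, sub_zero,
    ((hasDerivAt_inv_sqrt_sq_add_sq x.2.1 hx).const_mul c).deriv]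
  ring

lemma Xtwo_const_mul_inv_sqrt {x : ℝ × ℝ × ℝ} (c : ℝ) (hx : x.1 ^ 2 + x.2.1 ^ 2 ≠ 0) :
    Xtwo (fun y => c * (√(y.1 ^ 2 + y.2.1 ^ 2))⁻¹) x
      = -(c * x.2.1 / √(x.1 ^ 2 + x.2.1 ^ 2) ^ 3) := by
  rw [add_comm] at hx
  simp only [Xtwo, deriv_const', mul_zero, add_zero, add_comm (x.1 ^ 2),
    ((hasDerivAt_inv_sqrt_sq_add_sq x.1 hx).const_mul c).deriv]
  ring

lemma Xthree_div_normH_paraboloid (α : ℝ) :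
    (fun y => Xthree (fun y => y.2.2 - α * (y.1 ^ 2 + y.2.1 ^ 2)) y
      / normH (fun y => y.2.2 - α * (y.1 ^ 2 + y.2.1 ^ 2)) y)
      = fun y => 2 / √(1 + 16 * α ^ 2) * (√(y.1 ^ 2 + y.2.1 ^ 2))⁻¹ := by
  funext y
  rw [Xthree_paraboloid, normH_paraboloid]
  ring

lemma sq_add_sq_ne_zero_of_noncharacteristic {α : ℝ} {x : ℝ × ℝ × ℝ}
    (hnc : (Xone (fun y => y.2.2 - α * (y.1 ^ 2 + y.2.1 ^ 2)) x,
            Xtwo (fun y => y.2.2 - α * (y.1 ^ 2 + y.2.1 ^ 2)) x) ≠ (0, 0)) :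
    x.1 ^ 2 + x.2.1 ^ 2 ≠ 0 := by
  intro h
  have h₁ : x.1 = 0 := by nlinarith [sq_nonneg x.1, sq_nonneg x.2.1]
  have h₂ : x.2.1 = 0 := by nlinarith [sq_nonneg x.1, sq_nonneg x.2.1]
  exact hnc (by rw [Xone_paraboloid, Xtwo_paraboloid, h₁, h₂]; norm_num)

theorem stmt17_general (α : ℝ) (x : ℝ × ℝ × ℝ)
    (hnc : (Xone (fun y => y.2.2 - α * (y.1 ^ 2 + y.2.1 ^ 2)) x,
            Xtwo (fun y => y.2.2 - α * (y.1 ^ 2 + y.2.1 ^ 2)) x) ≠ (0, 0)) :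
    K0 (fun y => y.2.2 - α * (y.1 ^ 2 + y.2.1 ^ 2)) x
      = -(1 / (1 + 16 * α ^ 2)) * (2 / (x.1 ^ 2 + x.2.1 ^ 2)) := by
  have hρ := sq_add_sq_ne_zero_of_noncharacteristic hnc
  rw [K0, Xthree_div_normH_paraboloid, Xone_const_mul_inv_sqrt _ hρ,
    Xtwo_const_mul_inv_sqrt _ hρ, Xone_paraboloid, Xtwo_paraboloid, Xthree_paraboloid,
    normH_paraboloid]
  have hA : √(1 + 16 * α ^ 2) ^ 2 = 1 + 16 * α ^ 2 := sq_sqrt (by positivity)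
  have hR : √(x.1 ^ 2 + x.2.1 ^ 2) ^ 2 = x.1 ^ 2 + x.2.1 ^ 2 := sq_sqrt (by positivity)
  have hA0 : √(1 + 16 * α ^ 2) ≠ 0 := by positivity
  have hR0 : √(x.1 ^ 2 + x.2.1 ^ 2) ≠ 0 := by positivity
  field_simp
  rw [hA, show √(x.1 ^ 2 + x.2.1 ^ 2) ^ 4 = (√(x.1 ^ 2 + x.2.1 ^ 2) ^ 2) ^ 2 by ring, hR]
  ring

/-- For the paraboloid `{x₃ = α(x₁²+x₂²)}` with `α > 0` and defining function
`u = x₃ - α(x₁²+x₂²)`, the sub-Riemannian Gaussian curvature at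
non-characteristic points equals `-(1/(1+16α²))·(2/(x₁²+x₂²))`. -/
theorem stmt17 (α : ℝ) (hα : 0 < α) (x : ℝ × ℝ × ℝ)
    (hx : x.2.2 = α * (x.1 ^ 2 + x.2.1 ^ 2))
    (hnc : (Xone (fun y => y.2.2 - α * (y.1 ^ 2 + y.2.1 ^ 2)) x,
            Xtwo (fun y => y.2.2 - α * (y.1 ^ 2 + y.2.1 ^ 2)) x) ≠ (0, 0)) :
    K0 (fun y => y.2.2 - α * (y.1 ^ 2 + y.2.1 ^ 2)) x
      = -(1 / (1 + 16 * α ^ 2)) * (2 / (x.1 ^ 2 + x.2.1 ^ 2)) :=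
  stmt17_general α x hnc
end

section
/- Let $\delta$ be a smooth function with $\|\nabla_H\delta\|=1$, and define $A=\Delta_H\delta$, $B=-(X_3\delta)^2$, $C=(X_1\delta)(X_3X_2\delta)-(X_2\delta)(X_3X_1\delta)$, $D=X_3X_3\delta$, $E=(X_3X_1\delta)^2+(X_3X_2\delta)^2$, and $g(\alpha)=\langle\nabla_H\alpha,\nabla_H\delta\rangle$. Then assuming the relations $g(A)=B+2C-A^2$, $g(B)=0$, $g(C)=D-AC$, $g(D)=-E$, $g(E)=-2AE+2CD$ hold, one has for every $j\ge 2$: $\mathrm{div}_H\big(B^{j-2}(AD-E)\,\nabla_H\delta\big)=B^{j-1}D$, where $\mathrm{div}_H(h\nabla_H\delta)=hA+g(h)$. -/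
lemma curve1 (x : ℝ × ℝ × ℝ) :
    HasDerivAt (fun s : ℝ => ((s, x.2.1, x.2.2) : ℝ × ℝ × ℝ)) ((1:ℝ),0,0) x.1 :=
  (hasDerivAt_id x.1).prodMk ((hasDerivAt_const _ _).prodMk (hasDerivAt_const _ _))

lemma curve2 (x : ℝ × ℝ × ℝ) :
    HasDerivAt (fun s : ℝ => ((x.1, s, x.2.2) : ℝ × ℝ × ℝ)) ((0:ℝ),1,0) x.2.1 :=
  (hasDerivAt_const _ _).prodMk ((hasDerivAt_id x.2.1).prodMk (hasDerivAt_const _ _))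

lemma curve3 (x : ℝ × ℝ × ℝ) :
    HasDerivAt (fun s : ℝ => ((x.1, x.2.1, s) : ℝ × ℝ × ℝ)) ((0:ℝ),0,1) x.2.2 :=
  (hasDerivAt_const _ _).prodMk ((hasDerivAt_const _ _).prodMk (hasDerivAt_id x.2.2))

lemma slice1 (f : ℝ × ℝ × ℝ → ℝ) (hf : ContDiff ℝ (⊤ : ℕ∞) f) (x : ℝ × ℝ × ℝ) :
    HasDerivAt (fun s => f (s, x.2.1, x.2.2)) (fderiv ℝ f x (1,0,0)) x.1 :=
  ((hf.differentiable (by simp) x).hasFDerivAt.comp_hasDerivAt x.1 (curve1 x))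

lemma slice2 (f : ℝ × ℝ × ℝ → ℝ) (hf : ContDiff ℝ (⊤ : ℕ∞) f) (x : ℝ × ℝ × ℝ) :
    HasDerivAt (fun s => f (x.1, s, x.2.2)) (fderiv ℝ f x (0,1,0)) x.2.1 :=
  ((hf.differentiable (by simp) x).hasFDerivAt.comp_hasDerivAt x.2.1 (curve2 x))

lemma slice3 (f : ℝ × ℝ × ℝ → ℝ) (hf : ContDiff ℝ (⊤ : ℕ∞) f) (x : ℝ × ℝ × ℝ) :
    HasDerivAt (fun s => f (x.1, x.2.1, s)) (fderiv ℝ f x (0,0,1)) x.2.2 :=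
  ((hf.differentiable (by simp) x).hasFDerivAt.comp_hasDerivAt x.2.2 (curve3 x))

lemma Xone_eq (f : ℝ × ℝ × ℝ → ℝ) (hf : ContDiff ℝ (⊤ : ℕ∞) f) (x : ℝ × ℝ × ℝ) :
    Xone f x = fderiv ℝ f x (1,0,0) - x.2.1 / 2 * fderiv ℝ f x (0,0,1) := by
  rw [Xone, (slice1 f hf x).deriv, (slice3 f hf x).deriv]

lemma Xtwo_eq (f : ℝ × ℝ × ℝ → ℝ) (hf : ContDiff ℝ (⊤ : ℕ∞) f) (x : ℝ × ℝ × ℝ) :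
    Xtwo f x = fderiv ℝ f x (0,1,0) + x.1 / 2 * fderiv ℝ f x (0,0,1) := by
  rw [Xtwo, (slice2 f hf x).deriv, (slice3 f hf x).deriv]

lemma Xthree_eq (f : ℝ × ℝ × ℝ → ℝ) (hf : ContDiff ℝ (⊤ : ℕ∞) f) (x : ℝ × ℝ × ℝ) :
    Xthree f x = fderiv ℝ f x (0,0,1) := by
  rw [Xthree, (slice3 f hf x).deriv]

lemma Xone_smooth (f : ℝ × ℝ × ℝ → ℝ) (hf : ContDiff ℝ (⊤ : ℕ∞) f) :
    ContDiff ℝ (⊤ : ℕ∞) (Xone f) := by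
  have h := hf.fderiv_right (m := (⊤ : ℕ∞)) le_rfl
  have h2 : ContDiff ℝ (⊤ : ℕ∞) (fun x : ℝ×ℝ×ℝ =>
      fderiv ℝ f x (1,0,0) - x.2.1 / 2 * fderiv ℝ f x (0,0,1)) :=
    (h.clm_apply contDiff_const).sub
      ((contDiff_snd.fst.div_const 2).mul (h.clm_apply contDiff_const))
  rw [show Xone f = _ from funext (Xone_eq f hf)]; exact h2

lemma Xtwo_smooth (f : ℝ × ℝ × ℝ → ℝ) (hf : ContDiff ℝ (⊤ : ℕ∞) f) :
    ContDiff ℝ (⊤ : ℕ∞) (Xtwo f) := by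
  have h := hf.fderiv_right (m := (⊤ : ℕ∞)) le_rfl
  have h2 : ContDiff ℝ (⊤ : ℕ∞) (fun x : ℝ×ℝ×ℝ =>
      fderiv ℝ f x (0,1,0) + x.1 / 2 * fderiv ℝ f x (0,0,1)) :=
    (h.clm_apply contDiff_const).add
      ((contDiff_fst.div_const 2).mul (h.clm_apply contDiff_const))
  rw [show Xtwo f = _ from funext (Xtwo_eq f hf)]; exact h2

lemma Xthree_smooth (f : ℝ × ℝ × ℝ → ℝ) (hf : ContDiff ℝ (⊤ : ℕ∞) f) :
    ContDiff ℝ (⊤ : ℕ∞) (Xthree f) := by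
  have h := hf.fderiv_right (m := (⊤ : ℕ∞)) le_rfl
  have h2 : ContDiff ℝ (⊤ : ℕ∞) (fun x : ℝ×ℝ×ℝ => fderiv ℝ f x (0,0,1)) :=
    h.clm_apply contDiff_const
  rw [show Xthree f = _ from funext (Xthree_eq f hf)]; exact h2

lemma Xone_mul (f g : ℝ × ℝ × ℝ → ℝ) (hf : ContDiff ℝ (⊤ : ℕ∞) f) (hg : ContDiff ℝ (⊤ : ℕ∞) g)
    (x : ℝ × ℝ × ℝ) :
    Xone (fun y => f y * g y) x = Xone f x * g x + f x * Xone g x := by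
  rw [Xone, Xone, Xone, ((slice1 f hf x).fun_mul (slice1 g hg x)).deriv,
    ((slice3 f hf x).fun_mul (slice3 g hg x)).deriv, (slice1 f hf x).deriv,
    (slice3 f hf x).deriv, (slice1 g hg x).deriv, (slice3 g hg x).deriv]
  ring

lemma Xtwo_mul (f g : ℝ × ℝ × ℝ → ℝ) (hf : ContDiff ℝ (⊤ : ℕ∞) f) (hg : ContDiff ℝ (⊤ : ℕ∞) g)
    (x : ℝ × ℝ × ℝ) :
    Xtwo (fun y => f y * g y) x = Xtwo f x * g x + f x * Xtwo g x := by
  rw [Xtwo, Xtwo, Xtwo, ((slice2 f hf x).fun_mul (slice2 g hg x)).deriv,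
    ((slice3 f hf x).fun_mul (slice3 g hg x)).deriv, (slice2 f hf x).deriv,
    (slice3 f hf x).deriv, (slice2 g hg x).deriv, (slice3 g hg x).deriv]
  ring

lemma Xone_sub (f g : ℝ × ℝ × ℝ → ℝ) (hf : ContDiff ℝ (⊤ : ℕ∞) f) (hg : ContDiff ℝ (⊤ : ℕ∞) g)
    (x : ℝ × ℝ × ℝ) :
    Xone (fun y => f y - g y) x = Xone f x - Xone g x := by
  rw [Xone, Xone, Xone, ((slice1 f hf x).fun_sub (slice1 g hg x)).deriv,
    ((slice3 f hf x).fun_sub (slice3 g hg x)).deriv, (slice1 f hf x).deriv,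
    (slice3 f hf x).deriv, (slice1 g hg x).deriv, (slice3 g hg x).deriv]
  ring

lemma Xtwo_sub (f g : ℝ × ℝ × ℝ → ℝ) (hf : ContDiff ℝ (⊤ : ℕ∞) f) (hg : ContDiff ℝ (⊤ : ℕ∞) g)
    (x : ℝ × ℝ × ℝ) :
    Xtwo (fun y => f y - g y) x = Xtwo f x - Xtwo g x := by
  rw [Xtwo, Xtwo, Xtwo, ((slice2 f hf x).fun_sub (slice2 g hg x)).deriv,
    ((slice3 f hf x).fun_sub (slice3 g hg x)).deriv, (slice2 f hf x).deriv,
    (slice3 f hf x).deriv, (slice2 g hg x).deriv, (slice3 g hg x).deriv]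
  ring

lemma Xone_const (c : ℝ) (x : ℝ × ℝ × ℝ) : Xone (fun _ => c) x = 0 := by
  simp [Xone]

lemma Xtwo_const (c : ℝ) (x : ℝ × ℝ × ℝ) : Xtwo (fun _ => c) x = 0 := by
  simp [Xtwo]

/-- The key algebraic identity behind the simplified Steiner formula: with
`A = Δ_Hδ`, `B = -(X₃δ)²`, `C = X₁δ·X₃X₂δ - X₂δ·X₃X₁δ`, `D = X₃X₃δ`,
`E = (X₃X₁δ)² + (X₃X₂δ)²` and `g(α) = ⟨∇_Hα, ∇_Hδ⟩`, assuming the iterated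
divergence relations, for every `j ≥ 2` one has
`div_H(B^{j-2}(AD-E)∇_Hδ) = B^{j-2}(AD-E)·A + g(B^{j-2}(AD-E)) = B^{j-1}D`. -/
theorem stmt19 (δ : ℝ × ℝ × ℝ → ℝ) (hδ : ContDiff ℝ (⊤ : ℕ∞) δ)
    (hunit : ∀ x, (Xone δ x) ^ 2 + (Xtwo δ x) ^ 2 = 1)
    (A B C D E : ℝ × ℝ × ℝ → ℝ)
    (hA : A = fun x => Xone (Xone δ) x + Xtwo (Xtwo δ) x)
    (hB : B = fun x => -(Xthree δ x) ^ 2)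
    (hC : C = fun x => Xone δ x * Xthree (Xtwo δ) x
      - Xtwo δ x * Xthree (Xone δ) x)
    (hD : D = fun x => Xthree (Xthree δ) x)
    (hE : E = fun x => (Xthree (Xone δ) x) ^ 2 + (Xthree (Xtwo δ) x) ^ 2)
    (g : (ℝ × ℝ × ℝ → ℝ) → (ℝ × ℝ × ℝ → ℝ))
    (hg : ∀ α, g α = fun x => Xone α x * Xone δ x + Xtwo α x * Xtwo δ x)
    (hgA : g A = fun x => B x + 2 * C x - (A x) ^ 2)
    (hgB : g B = fun _ => 0)
    (hgC : g C = fun x => D x - A x * C x)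
    (hgD : g D = fun x => -E x)
    (hgE : g E = fun x => -2 * A x * E x + 2 * C x * D x) :
    ∀ j : ℕ, 2 ≤ j → ∀ x,
      (B x) ^ (j - 2) * (A x * D x - E x) * A x
        + g (fun y => (B y) ^ (j - 2) * (A y * D y - E y)) x
      = (B x) ^ (j - 1) * D x := by
  -- smoothness of the coefficient functions
  have sA : ContDiff ℝ (⊤ : ℕ∞) A := by
    rw [hA]
    exact (Xone_smooth _ (Xone_smooth δ hδ)).add (Xtwo_smooth _ (Xtwo_smooth δ hδ))
  have sB : ContDiff ℝ (⊤ : ℕ∞) B := by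
    rw [hB]; exact ((Xthree_smooth δ hδ).pow 2).neg
  have sD : ContDiff ℝ (⊤ : ℕ∞) D := by
    rw [hD]; exact Xthree_smooth _ (Xthree_smooth δ hδ)
  have sE : ContDiff ℝ (⊤ : ℕ∞) E := by
    rw [hE]
    exact ((Xthree_smooth _ (Xone_smooth δ hδ)).pow 2).add
      ((Xthree_smooth _ (Xtwo_smooth δ hδ)).pow 2)
  -- Leibniz and linearity for g
  have g_mul : ∀ (α β : ℝ × ℝ × ℝ → ℝ), ContDiff ℝ (⊤ : ℕ∞) α → ContDiff ℝ (⊤ : ℕ∞) β → ∀ x,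
      g (fun y => α y * β y) x = g α x * β x + α x * g β x := by
    intro α β hα hβ x
    simp only [hg]
    rw [Xone_mul α β hα hβ x, Xtwo_mul α β hα hβ x]
    ring
  have g_sub : ∀ (α β : ℝ × ℝ × ℝ → ℝ), ContDiff ℝ (⊤ : ℕ∞) α → ContDiff ℝ (⊤ : ℕ∞) β → ∀ x,
      g (fun y => α y - β y) x = g α x - g β x := by
    intro α β hα hβ x
    simp only [hg]
    rw [Xone_sub α β hα hβ x, Xtwo_sub α β hα hβ x]
    ring
  -- g kills powers of B
  have gBpow : ∀ (n : ℕ) (x : ℝ × ℝ × ℝ), g (fun y => (B y) ^ n) x = 0 := by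
    intro n
    induction n with
    | zero =>
      intro x
      simp only [pow_zero, hg, Xone_const, Xtwo_const, zero_mul, add_zero]
    | succ n ih =>
      intro x
      have : (fun y => (B y) ^ (n + 1)) = fun y => (B y) ^ n * B y := by
        funext y; rw [pow_succ]
      rw [this, g_mul (fun y => (B y) ^ n) B (sB.pow n) sB x, ih x,
        congrFun hgB x]
      ring
  intro j hj x
  have hADE : g (fun y => A y * D y - E y) x
      = B x * D x - (A x) ^ 2 * D x + A x * E x := by
    rw [g_sub (fun y => A y * D y) E ((sA.mul sD)) sE x,
      g_mul A D sA sD x, congrFun hgA x, congrFun hgD x, congrFun hgE x]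
    ring
  rw [g_mul (fun y => (B y) ^ (j - 2)) (fun y => A y * D y - E y)
      (sB.pow (j - 2)) ((sA.mul sD).sub sE) x, gBpow (j - 2) x, hADE]
  have hj1 : j - 1 = (j - 2) + 1 := by omega
  rw [hj1, pow_succ]
  ring
end
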